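/- arXiv:1912.10085 — 2 statements merged into one kernel-verified Lean document; each statement's English description precedes it below -/
import Mathlib

section
/- Coupling monotonicity (claim in the proof of Lemma 3.1): fix d ≥ 1 and p₁ ≤ p₂ in (0,1]. Couple the two-type frog model started from disjoint bounded sets (A,B) with jump probabilities (p₁,p₂) with the one-type frog model started from A∪B with jump probability p₁, so that both processes use the same initial particle configuration, the same family of random walks S, and the same family of delay variables L. Then deterministically, for every n ≥ 0, ξ^{A∪B}_n(p₁) ⊆ ξ^{A,B}_n(p₁,p₂): every site discovered by time n in the one-type process with the slower jump probability is discovered by time n in the two-type process. -/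
open MeasureTheory ProbabilityTheory Filter Set
open scoped Pointwise ENNReal

namespace Frog

variable (d : ℕ)

/-- Sites of the lattice `ℤ^d`. -/
abbrev Site := Fin d → ℤ

/-- Sample space: an initial configuration (number of sleeping particles at each site),
a family of random-walk increments indexed by particles `(x,j)`, and a family of delay
variables `L^{x,j}_{n,k}` indexed by particles. -/
abbrev Omega := (Site d → ℕ) × ((Site d × ℕ) → ℕ → Site d) × ((Site d × ℕ) → ℕ → ℕ → ℝ)

/-- The `2d` unit vectors `±e_i` of `ℤ^d`. -/
def unitVecs : Finset (Site d) :=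
  (Finset.univ : Finset (Fin d × Bool)).image
    (fun q => fun i => if i = q.1 then (if q.2 then 1 else -1) else 0)

/-- The uniform distribution on the `2d` unit vectors, i.e. the law of one increment of a
simple symmetric random walk on `ℤ^d`. -/
noncomputable def stepLaw : Measure (Site d) :=
  ((unitVecs d).card : ℝ≥0∞)⁻¹ • ∑ e ∈ unitVecs d, Measure.dirac e

/-- The uniform distribution on `[0,1]`. -/
noncomputable def unif01 : Measure ℝ := volume.restrict (Set.Icc (0:ℝ) 1)

/-- Waiting time for the next jump of a lazy particle with jump probability `p`, given the
row `Ln = L^{x,j}_{n,·}` of its delay variables: the least `k ≥ 1` with `Ln k ≤ p`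
(`⊤` if there is no such `k`). -/
noncomputable def wait (p : ℝ) (Ln : ℕ → ℝ) : ℕ∞ :=
  sInf ((↑) '' {k : ℕ | 1 ≤ k ∧ Ln k ≤ p})

/-- Time of the `n`-th jump of a particle with jump probability `p`, delay variables `L`,
activated at time `a`. -/
noncomputable def jumpTime (p : ℝ) (L : ℕ → ℕ → ℝ) (a : ℕ) : ℕ → ℕ∞
  | 0 => (a : ℕ∞)
  | n + 1 => jumpTime p L a n + wait p (L n)

open Classical in
/-- Number of jumps performed by time `t` by a particle with jump probability `p`,
delay variables `L`, activated at time `a`. -/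
noncomputable def numJumps (p : ℝ) (L : ℕ → ℕ → ℝ) (a t : ℕ) : ℕ :=
  ((Finset.range (t + 1)).filter (fun n => jumpTime p L a (n + 1) ≤ (t : ℕ∞))).card

/-- Position at time `t` of a particle started at `x`, with random-walk increments `s`,
jump probability `p`, delay variables `L`, activated at time `a`. -/
noncomputable def posAt (x : Site d) (s : ℕ → Site d) (p : ℝ) (L : ℕ → ℕ → ℝ)
    (a t : ℕ) : Site d :=
  x + ∑ k ∈ Finset.range (numJumps p L a t), s k

open Classical in
/-- The full state of the two-type frog model: `status₂ … t y = some (i, a)` means that site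
`y` has been discovered by time `t`, that it was discovered at time `a`, and that its
particles carry type `i` (`false` = type 1, `true` = type 2); `none` means `y` is
undiscovered at time `t`.  Type-`i` particles jump with probability `p i`; particles in `A`
(resp. `B`) are active with type 1 (resp. 2) from time `0`; `tie` is the tie-breaker rule
used when both types simultaneously reach an undiscovered site. -/
noncomputable def status₂ (config : Site d → ℕ) (S : (Site d × ℕ) → ℕ → Site d)
    (L : (Site d × ℕ) → ℕ → ℕ → ℝ) (p : Bool → ℝ) (A B : Set (Site d))
    (tie : Site d → ℕ → Bool) : ℕ → Site d → Option (Bool × ℕ)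
  | 0, y => if y ∈ A then some (false, 0) else if y ∈ B then some (true, 0) else none
  | t + 1, y =>
    match status₂ config S L p A B tie t y with
    | some s => some s
    | none =>
      have hit : Bool → Prop := fun i => ∃ x j a, j < config x ∧
        status₂ config S L p A B tie t x = some (i, a) ∧
        posAt d x (S (x, j)) (p i) (L (x, j)) a (t + 1) = y
      if hit false then
        (if hit true then some (tie y (t + 1), t + 1) else some (false, t + 1))
      else if hit true then some (true, t + 1) else none

/-- Set of sites discovered by time `t` in the two-type model. -/
noncomputable def xi₂ (config : Site d → ℕ) (S : (Site d × ℕ) → ℕ → Site d)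
    (L : (Site d × ℕ) → ℕ → ℕ → ℝ) (p₁ p₂ : ℝ) (A B : Set (Site d))
    (tie : Site d → ℕ → Bool) (t : ℕ) : Set (Site d) :=
  {y | status₂ d config S L (fun i => if i then p₂ else p₁) A B tie t y ≠ none}

/-- State of the one-type frog model with jump probability `p` and initially active set `A₀`:
`status₁ … t y = some a` iff site `y` has been discovered at time `a ≤ t`.  It is the
two-type model with an empty second initial set. -/
noncomputable def status₁ (config : Site d → ℕ) (S : (Site d × ℕ) → ℕ → Site d)
    (L : (Site d × ℕ) → ℕ → ℕ → ℝ) (p : ℝ) (A₀ : Set (Site d)) (t : ℕ) (y : Site d) :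
    Option ℕ :=
  (status₂ d config S L (fun _ => p) A₀ ∅ (fun _ _ => false) t y).map Prod.snd

/-- Set of sites discovered by time `t` in the one-type model. -/
noncomputable def xi₁ (config : Site d → ℕ) (S : (Site d × ℕ) → ℕ → Site d)
    (L : (Site d × ℕ) → ℕ → ℕ → ℝ) (p : ℝ) (A₀ : Set (Site d)) (t : ℕ) : Set (Site d) :=
  {y | status₁ d config S L p A₀ t y ≠ none}

/-- Continuum version of a set of sites: each site is replaced by the half-open unit cube
centered at it. -/
def cont (ξ : Set (Site d)) : Set (Fin d → ℝ) :=
  {z | ∃ x ∈ ξ, ∀ i, -(1/2 : ℝ) < z i - x i ∧ z i - x i ≤ 1/2}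

/-- Continuum set of discovered sites for the one-type model driven by the randomness `ω`. -/
noncomputable def Xi₁ (p : ℝ) (A₀ : Set (Site d)) (t : ℕ) (ω : Omega d) :
    Set (Fin d → ℝ) :=
  cont d (xi₁ d ω.1 ω.2.1 ω.2.2 p A₀ t)

/-- Continuum set of discovered sites for the two-type model driven by the randomness `ω`. -/
noncomputable def Xi₂ (p₁ p₂ : ℝ) (A B : Set (Site d)) (tie : Site d → ℕ → Bool) (t : ℕ)
    (ω : Omega d) : Set (Fin d → ℝ) :=
  cont d (xi₂ d ω.1 ω.2.1 ω.2.2 p₁ p₂ A B tie t)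

section Independence

variable (Arb : Set (Site d))

/-- Index type for the family of all independent random coordinates: the configuration on
the arbitrarily populated region `Arb` (as one block), the configuration at each site
outside `Arb`, each random-walk increment, and each delay variable. -/
abbrev Idx := (Unit ⊕ {x : Site d // x ∉ Arb}) ⊕ ((Site d × ℕ) × ℕ ⊕ (Site d × ℕ) × ℕ × ℕ)

/-- Value type of each coordinate. -/
def fam : Idx d Arb → Type :=
  fun i => match i with
  | .inl (.inl _) => {x : Site d // x ∈ Arb} → ℕ
  | .inl (.inr _) => ℕ
  | .inr (.inl _) => Site d
  | .inr (.inr _) => ℝ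

/-- Measurable structure on the coordinates. -/
def famMS : ∀ i, MeasurableSpace (fam d Arb i) :=
  fun i => match i with
  | .inl (.inl _) => inferInstanceAs (MeasurableSpace ({x : Site d // x ∈ Arb} → ℕ))
  | .inl (.inr _) => inferInstanceAs (MeasurableSpace ℕ)
  | .inr (.inl _) => inferInstanceAs (MeasurableSpace (Site d))
  | .inr (.inr _) => inferInstanceAs (MeasurableSpace ℝ)

/-- The family of coordinate random variables on the sample space. -/
def coords : ∀ i, Omega d → fam d Arb i :=
  fun i => match i with
  | .inl (.inl _) => fun ω x => ω.1 x.1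
  | .inl (.inr x) => fun ω => ω.1 x.1
  | .inr (.inl q) => fun ω => ω.2.1 q.1 q.2
  | .inr (.inr q) => fun ω => ω.2.2 q.1 q.2.1 q.2.2

/-- `P` is a law of the frog model randomness with i.i.d. configuration `ν` outside the
region `Arb` (on which the configuration is arbitrary): all coordinates -- the configuration
block on `Arb`, the configuration variables off `Arb`, the random-walk increments and the
delay variables -- are jointly independent, the increments are uniform on the `2d` unit
vectors, the delays are uniform on `[0,1]`, and each configuration variable off `Arb` has
law `ν`. -/
def IsFrogMeasure (ν : Measure ℕ) (P : Measure (Omega d)) : Prop :=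
  IsProbabilityMeasure P ∧
  iIndepFun (m := famMS d Arb) (coords d Arb) P ∧
  (∀ x ∉ Arb, P.map (fun ω : Omega d => ω.1 x) = ν) ∧
  (∀ q n, P.map (fun ω : Omega d => ω.2.1 q n) = stepLaw d) ∧
  (∀ q n k, P.map (fun ω : Omega d => ω.2.2 q n k) = unif01)

end Independence

/-- The one-type shape property: the continuum discovered set of the process with jump
probability `p` started from the initially active set `A₀`, scaled by time, approximates
`𝒜` to within `ε`, eventually, almost surely. -/
def HasShape (P : Measure (Omega d)) (p : ℝ) (A₀ : Set (Site d))
    (𝒜 : Set (Fin d → ℝ)) : Prop :=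
  ∀ ε : ℝ, 0 < ε → ε < 1 → ∀ᵐ ω ∂P, ∀ᶠ n : ℕ in atTop,
    ((1 - ε) * n) • 𝒜 ⊆ Xi₁ d p A₀ n ω ∧ Xi₁ d p A₀ n ω ⊆ ((1 + ε) * n) • 𝒜

/-- The event that the origin carries at least one particle. -/
def occupied : Set (Omega d) := {ω | 1 ≤ ω.1 0}

/-- `discoversAt₂ … x j t y` : in the two-type model, particle `j` at site `x` exists, is
active, sits on `y` at time `t`, and `y` is discovered exactly at time `t` (so `(x,j)` is
one of the particles discovering `y`). -/
noncomputable def discoversAt₂ (config : Site d → ℕ) (S : (Site d × ℕ) → ℕ → Site d)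
    (L : (Site d × ℕ) → ℕ → ℕ → ℝ) (p₁ p₂ : ℝ) (A B : Set (Site d))
    (tie : Site d → ℕ → Bool) (x : Site d) (j : ℕ) (t : ℕ) (y : Site d) : Prop :=
  j < config x ∧
  status₂ d config S L (fun i => if i then p₂ else p₁) A B tie t y ≠ none ∧
  (∀ t' < t, status₂ d config S L (fun i => if i then p₂ else p₁) A B tie t' y = none) ∧
  ∃ i a, status₂ d config S L (fun i => if i then p₂ else p₁) A B tie t x = some (i, a) ∧
    posAt d x (S (x, j)) (if i then p₂ else p₁) (L (x, j)) a t = y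

/-- Same notion for the one-type model. -/
noncomputable def discoversAt₁ (config : Site d → ℕ) (S : (Site d × ℕ) → ℕ → Site d)
    (L : (Site d × ℕ) → ℕ → ℕ → ℝ) (p : ℝ) (A₀ : Set (Site d))
    (x : Site d) (j : ℕ) (t : ℕ) (y : Site d) : Prop :=
  discoversAt₂ d config S L p p A₀ ∅ (fun _ _ => false) x j t y

/-- The set of sites ever discovered by particle `(x,j)` in the one-type model. -/
noncomputable def discoveredBy₁ (config : Site d → ℕ) (S : (Site d × ℕ) → ℕ → Site d)
    (L : (Site d × ℕ) → ℕ → ℕ → ℝ) (p : ℝ) (A₀ : Set (Site d)) (x : Site d) (j : ℕ) :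
    Set (Site d) :=
  {y | ∃ t, discoversAt₁ d config S L p A₀ x j t y}

/-- The set of sites ever discovered by particle `(x,j)` in the two-type model. -/
noncomputable def discoveredBy₂ (config : Site d → ℕ) (S : (Site d × ℕ) → ℕ → Site d)
    (L : (Site d × ℕ) → ℕ → ℕ → ℝ) (p₁ p₂ : ℝ) (A B : Set (Site d))
    (tie : Site d → ℕ → Bool) (x : Site d) (j : ℕ) : Set (Site d) :=
  {y | ∃ t, discoversAt₂ d config S L p₁ p₂ A B tie x j t y}

/-- The set of particles ever activated with type `i` in the two-type model. -/
noncomputable def typedParticles (config : Site d → ℕ) (S : (Site d × ℕ) → ℕ → Site d)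
    (L : (Site d × ℕ) → ℕ → ℕ → ℝ) (p₁ p₂ : ℝ) (A B : Set (Site d))
    (tie : Site d → ℕ → Bool) (i : Bool) : Set (Site d × ℕ) :=
  {q | q.2 < config q.1 ∧ ∃ t a,
    status₂ d config S L (fun i => if i then p₂ else p₁) A B tie t q.1 = some (i, a)}

/-- The coexistence event: both types activate infinitely many particles. -/
noncomputable def coex (p₁ p₂ : ℝ) (A B : Set (Site d)) (tie : Site d → ℕ → Bool) :
    Set (Omega d) :=
  {ω | (typedParticles d ω.1 ω.2.1 ω.2.2 p₁ p₂ A B tie false).Infinite ∧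
       (typedParticles d ω.1 ω.2.1 ω.2.2 p₁ p₂ A B tie true).Infinite}

end Frog

/-! By induction on time, every site is discovered in the two-type process no later than in the
one-type process. If a particle discovers `y` in the one-type process after `m` jumps, its copy in
the two-type process was activated no later and, reading the same delay variables against a jump
probability at least as large, has made at least `m` jumps by then. Its jump count grows by at
most one per time step, so at some earlier time it had made exactly `m` jumps, and then it sat
on `y`, following the same walk. -/

theorem Nat.exists_le_apply_eq {f : ℕ → ℕ} (hstep : ∀ s, f (s + 1) ≤ f s + 1) {m N : ℕ}
    (h0 : f 0 ≤ m) (hN : m ≤ f N) : ∃ s ≤ N, f s = m := by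
  induction N with
  | zero => exact ⟨0, le_rfl, le_antisymm h0 hN⟩
  | succ N ih =>
    rcases le_or_gt m (f N) with h | h
    · obtain ⟨s, hs, hfs⟩ := ih h
      exact ⟨s, hs.trans N.le_succ, hfs⟩
    · exact ⟨N + 1, le_rfl, by have := hstep N; omega⟩

theorem Finset.lt_card_filter_range_iff {P : ℕ → Prop} [DecidablePred P] (hP : Antitone P)
    {N : ℕ} (hN : ∀ m, P m → m < N) (n : ℕ) : n < ((range N).filter P).card ↔ P n := by
  constructor
  · intro hn
    by_contra hPn
    have hsub : (range N).filter P ⊆ range n := fun m hm => by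
      rw [mem_filter] at hm
      exact mem_range.2 (lt_of_not_ge fun hnm => hPn (hP hnm hm.2))
    exact (card_le_card hsub).not_gt (by simpa using hn)
  · intro hPn
    have hsub : range (n + 1) ⊆ (range N).filter P := fun m hm => by
      have hPm : P m := hP (Nat.lt_succ_iff.1 (mem_range.1 hm)) hPn
      exact mem_filter.2 ⟨mem_range.2 (hN m hPm), hPm⟩
    simpa using card_le_card hsub

namespace Frog

section Jumps

variable (p : ℝ) (L : ℕ → ℕ → ℝ) (a : ℕ)

theorem one_le_wait (Ln : ℕ → ℝ) : 1 ≤ wait p Ln :=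
  le_sInf <| by
    rintro _ ⟨k, ⟨hk, _⟩, rfl⟩
    exact_mod_cast hk

theorem wait_anti {p q : ℝ} (h : p ≤ q) (Ln : ℕ → ℝ) : wait q Ln ≤ wait p Ln :=
  sInf_le_sInf <| by
    rintro _ ⟨k, ⟨hk, hkp⟩, rfl⟩
    exact ⟨k, ⟨hk, hkp.trans h⟩, rfl⟩

theorem jumpTime_add_one_le (n : ℕ) : jumpTime p L a n + 1 ≤ jumpTime p L a (n + 1) :=
  add_le_add_right (one_le_wait p _) _

theorem jumpTime_monotone : Monotone (jumpTime p L a) :=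
  monotone_nat_of_le_succ fun _ => le_self_add

theorem add_le_jumpTime (n : ℕ) : ((a + n : ℕ) : ℕ∞) ≤ jumpTime p L a n := by
  induction n with
  | zero => rfl
  | succ n ih =>
    calc ((a + (n + 1) : ℕ) : ℕ∞) = ((a + n : ℕ) : ℕ∞) + 1 := by push_cast; ring
    _ ≤ jumpTime p L a n + 1 := add_le_add_left ih 1
    _ ≤ jumpTime p L a (n + 1) := jumpTime_add_one_le p L a n

theorem jumpTime_le_jumpTime {p q : ℝ} (h : p ≤ q) {a' : ℕ} (ha : a' ≤ a) (n : ℕ) :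
    jumpTime q L a' n ≤ jumpTime p L a n := by
  induction n with
  | zero => exact Nat.cast_le.2 ha
  | succ n ih => exact add_le_add ih (wait_anti h _)

theorem lt_numJumps_iff (t n : ℕ) :
    n < numJumps p L a t ↔ jumpTime p L a (n + 1) ≤ (t : ℕ∞) := by
  rw [numJumps]
  convert Finset.lt_card_filter_range_iff (P := fun m => jumpTime p L a (m + 1) ≤ t)
    (fun _ _ hmk hk => (jumpTime_monotone p L a (by omega)).trans hk) (fun m hm => ?_) n
  have := (add_le_jumpTime p L a (m + 1)).trans hm
  norm_cast at this
  omega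

theorem numJumps_eq_zero_of_le {t : ℕ} (ht : t ≤ a) : numJumps p L a t = 0 := by
  by_contra h
  have h1 := (lt_numJumps_iff p L a t 0).1 (Nat.pos_of_ne_zero h)
  have h2 := (add_le_jumpTime p L a 1).trans h1
  norm_cast at h2
  omega

theorem numJumps_succ_le (t : ℕ) : numJumps p L a (t + 1) ≤ numJumps p L a t + 1 := by
  set m := numJumps p L a t
  by_contra! h
  have hslow : (t : ℕ∞) < jumpTime p L a (m + 1) :=
    lt_of_not_ge fun hle => (lt_numJumps_iff p L a t m).2 hle |>.false
  have hfast := (lt_numJumps_iff p L a (t + 1) (m + 1)).1 h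
  have := (add_le_add_left (Order.add_one_le_of_lt hslow) 1).trans
    ((jumpTime_add_one_le p L a (m + 1)).trans hfast)
  norm_cast at this
  omega

theorem numJumps_le_numJumps {p q : ℝ} (h : p ≤ q) {a' : ℕ} (ha : a' ≤ a) (t : ℕ) :
    numJumps p L a t ≤ numJumps q L a' t := by
  refine le_of_forall_lt fun n hn => ?_
  rw [lt_numJumps_iff] at hn ⊢
  exact (jumpTime_le_jumpTime L a h ha (n + 1)).trans hn

end Jumps

section Discovery

variable {d : ℕ} {config : Site d → ℕ} {S : (Site d × ℕ) → ℕ → Site d}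
  {L : (Site d × ℕ) → ℕ → ℕ → ℝ} {p : Bool → ℝ} {A B : Set (Site d)}
  {tie : Site d → ℕ → Bool} {t : ℕ} {y : Site d}

theorem status₂_zero_ne_none_iff :
    status₂ d config S L p A B tie 0 y ≠ none ↔ y ∈ A ∪ B := by
  rw [status₂]
  split_ifs <;> simp_all

theorem status₂_succ_of_some {s : Bool × ℕ}
    (h : status₂ d config S L p A B tie t y = some s) :
    status₂ d config S L p A B tie (t + 1) y = some s := by
  rw [status₂, h]

theorem status₂_mono {t' : ℕ} (htt : t ≤ t') {s : Bool × ℕ}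
    (h : status₂ d config S L p A B tie t y = some s) :
    status₂ d config S L p A B tie t' y = some s := by
  induction t', htt using Nat.le_induction with
  | base => exact h
  | succ _ _ ih => exact status₂_succ_of_some ih

theorem status₂_ne_none_mono {t' : ℕ} (htt : t ≤ t')
    (h : status₂ d config S L p A B tie t y ≠ none) :
    status₂ d config S L p A B tie t' y ≠ none := by
  obtain ⟨s, hs⟩ := Option.ne_none_iff_exists'.1 h
  simp [status₂_mono htt hs]

theorem status₂_succ_ne_none_of_hit {i : Bool} {x : Site d} {j a : ℕ} (hj : j < config x)
    (hx : status₂ d config S L p A B tie t x = some (i, a))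
    (hpos : posAt d x (S (x, j)) (p i) (L (x, j)) a (t + 1) = y) :
    status₂ d config S L p A B tie (t + 1) y ≠ none := by
  rcases hy : status₂ d config S L p A B tie t y with _ | s
  · rw [status₂, hy]
    dsimp only
    split_ifs with h1 h2 h3 <;> try exact Option.some_ne_none _
    cases i
    · exact absurd ⟨x, j, a, hj, hx, hpos⟩ h1
    · exact absurd ⟨x, j, a, hj, hx, hpos⟩ h3
  · simp [status₂_succ_of_some hy]

theorem status₂_succ_cases {s : Bool × ℕ}
    (h : status₂ d config S L p A B tie (t + 1) y = some s) :
    status₂ d config S L p A B tie t y = some s ∨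
      s.2 = t + 1 ∧ ∃ i x j a, j < config x ∧
        status₂ d config S L p A B tie t x = some (i, a) ∧
        posAt d x (S (x, j)) (p i) (L (x, j)) a (t + 1) = y := by
  rcases hy : status₂ d config S L p A B tie t y with _ | s'
  · right
    rw [status₂, hy] at h
    dsimp only at h
    split_ifs at h with hf ht ht <;> cases h
    exacts [⟨rfl, false, hf⟩, ⟨rfl, false, hf⟩, ⟨rfl, true, ht⟩]
  · left
    rwa [status₂_succ_of_some hy] at h

theorem status₂_snd_le {i : Bool} {a : ℕ}
    (h : status₂ d config S L p A B tie t y = some (i, a)) :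
    a ≤ t ∧ status₂ d config S L p A B tie a y = some (i, a) := by
  induction t with
  | zero =>
    have h0 := h
    rw [status₂] at h0
    split_ifs at h0 <;> cases h0
    exacts [⟨le_rfl, h⟩, ⟨le_rfl, h⟩]
  | succ t ih =>
    rcases status₂_succ_cases h with hprev | ⟨rfl, -⟩
    · exact (ih hprev).imp_left Nat.le_succ_of_le
    · exact ⟨le_rfl, h⟩

theorem status₂_posAt_ne_none {i : Bool} {x : Site d} {j a t₀ : ℕ} (hj : j < config x)
    (hx : status₂ d config S L p A B tie t₀ x = some (i, a)) (ha : a ≤ t) :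
    status₂ d config S L p A B tie t (posAt d x (S (x, j)) (p i) (L (x, j)) a t) ≠ none := by
  have hxa := (status₂_snd_le hx).2
  rcases ha.eq_or_lt with rfl | hlt
  · simp [posAt, numJumps_eq_zero_of_le, hxa]
  · obtain ⟨t, rfl⟩ : ∃ t', t = t' + 1 := ⟨t - 1, by omega⟩
    exact status₂_succ_ne_none_of_hit hj (status₂_mono (by omega) hxa) rfl

theorem status₂_ne_none_of_slower {q : Bool → ℝ} (hpq : ∀ i i', p i ≤ q i')
    {A' B' : Set (Site d)} (hAB : A ∪ B ⊆ A' ∪ B') (tie' : Site d → ℕ → Bool) {i : Bool}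
    {a : ℕ} (h : status₂ d config S L p A B tie t y = some (i, a)) :
    status₂ d config S L q A' B' tie' a y ≠ none := by
  induction t generalizing y i a with
  | zero =>
    obtain rfl : a = 0 := Nat.le_zero.1 (status₂_snd_le h).1
    exact status₂_zero_ne_none_iff.2
      (hAB (status₂_zero_ne_none_iff.1 (h ▸ Option.some_ne_none _)))
  | succ t ih =>
    rcases status₂_succ_cases h with hprev | ⟨rfl, i₀, x, j, a₀, hj, hx, rfl⟩
    · exact ih hprev
    obtain ⟨⟨i', a'⟩, hx'⟩ := Option.ne_none_iff_exists'.1 (ih hx)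
    have ha' := (status₂_snd_le hx').1
    have ha₀ := (status₂_snd_le hx).1
    have hm : numJumps (p i₀) (L (x, j)) a₀ (t + 1) ≤
        numJumps (q i') (L (x, j)) a' (a' + (t + 1 - a')) := by
      rw [show a' + (t + 1 - a') = t + 1 by omega]
      exact numJumps_le_numJumps _ _ (hpq i₀ i') ha' _
    obtain ⟨s, hs, hfs⟩ := Nat.exists_le_apply_eq
      (f := fun s => numJumps (q i') (L (x, j)) a' (a' + s))
      (fun s => numJumps_succ_le _ _ _ _) (by simp [numJumps_eq_zero_of_le]) hm
    have hpos : posAt d x (S (x, j)) (q i') (L (x, j)) a' (a' + s) =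
        posAt d x (S (x, j)) (p i₀) (L (x, j)) a₀ (t + 1) := by
      simp only [posAt, hfs]
    exact hpos ▸ status₂_ne_none_mono (by omega) (status₂_posAt_ne_none hj hx' (by omega))

end Discovery

end Frog

theorem one_type_discovered_subset_two_type_discovered_general (d : ℕ)
    (p₁ p₂ : ℝ) (hp₁₂ : p₁ ≤ p₂)
    (A B : Set (Frog.Site d))
    (config : Frog.Site d → ℕ) (S : (Frog.Site d × ℕ) → ℕ → Frog.Site d)
    (L : (Frog.Site d × ℕ) → ℕ → ℕ → ℝ) (tie : Frog.Site d → ℕ → Bool) (n : ℕ) :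
    Frog.xi₁ d config S L p₁ (A ∪ B) n ⊆ Frog.xi₂ d config S L p₁ p₂ A B tie n := by
  intro y hy
  obtain ⟨⟨i, a⟩, h⟩ :=
    Option.ne_none_iff_exists'.1 (by simpa [Frog.xi₁, Frog.status₁] using hy)
  have hslower : ∀ i i' : Bool, p₁ ≤ if i' then p₂ else p₁ := by
    intro _ i'
    cases i' <;> simp [hp₁₂]
  exact Frog.status₂_ne_none_mono (Frog.status₂_snd_le h).1
    (Frog.status₂_ne_none_of_slower hslower (by simp) tie h)

/-- **Coupling monotonicity (claim in the proof of Lemma 3.1).**  Fix `d ≥ 1` and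
`p₁ ≤ p₂` in `(0,1]`.  Couple the two-type frog model started from disjoint bounded sets
`(A,B)` with jump probabilities `(p₁,p₂)` with the one-type frog model started from `A ∪ B`
with jump probability `p₁`, using the same initial configuration `config`, the same family
of random walks `S` and the same family of delay variables `L`.  Then, deterministically,
for every `n`, every site discovered by time `n` in the one-type process is discovered by
time `n` in the two-type process: `ξ^{A∪B}_n(p₁) ⊆ ξ^{A,B}_n(p₁,p₂)`. -/
theorem one_type_discovered_subset_two_type_discovered (d : ℕ) (hd : 1 ≤ d)
    (p₁ p₂ : ℝ) (hp₁0 : 0 < p₁) (hp₁₂ : p₁ ≤ p₂) (hp₂1 : p₂ ≤ 1)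
    (A B : Set (Frog.Site d)) (hAB : Disjoint A B) (hAbdd : A.Finite) (hBbdd : B.Finite)
    (config : Frog.Site d → ℕ) (S : (Frog.Site d × ℕ) → ℕ → Frog.Site d)
    (L : (Frog.Site d × ℕ) → ℕ → ℕ → ℝ) (tie : Frog.Site d → ℕ → Bool) (n : ℕ) :
    Frog.xi₁ d config S L p₁ (A ∪ B) n ⊆ Frog.xi₂ d config S L p₁ p₂ A B tie n :=
  one_type_discovered_subset_two_type_discovered_general d p₁ p₂ hp₁₂ A B config S L tie n
end

section
/- Coupling claim in the proof of Proposition 1: let Σ ⊆ Z^d be a box containing the origin 0 and the bounded set A. Couple the one-type frog model Π̃^0 started from the origin (configuration drawn from ν everywhere) and the one-type frog model Π^A started from A (arbitrary configuration on Σ, ν elsewhere) so that on Σ^c they share the same initial particle configuration, random walks, and delay variables, while on Σ the configurations and driving randomness are independent. Let N_Σ be a (random, almost surely finite) time by which, in Π̃^0, all sites of Σ are discovered and after which no particle of Π̃^0 originating in Σ ever discovers a new site, and let N = min{n : ξ^A_n ⊇ ξ̃^0_{N_Σ}}. Then ξ̃^0_{n−N} ⊆ ξ^A_n for all n > N. 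-/
open MeasureTheory ProbabilityTheory Filter Set
open scoped Pointwise ENNReal

namespace Frog

variable (d : ℕ)

namespace CouplingAux
open Frog

lemma one_le_wait (p : ℝ) (Ln : ℕ → ℝ) : 1 ≤ wait p Ln := by
  rw [wait]
  refine le_sInf ?_
  rintro b ⟨k, ⟨hk, -⟩, rfl⟩
  exact_mod_cast hk

lemma jumpTime_eq (p : ℝ) (L : ℕ → ℕ → ℝ) (a n : ℕ) :
    jumpTime p L a n = (a : ℕ∞) + jumpTime p L 0 n := by
  induction n with
  | zero => simp [jumpTime]
  | succ n ih => rw [jumpTime, ih, jumpTime, add_assoc]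

lemma le_jumpTime_zero (p : ℝ) (L : ℕ → ℕ → ℝ) (n : ℕ) :
    (n : ℕ∞) ≤ jumpTime p L 0 n := by
  induction n with
  | zero => simp [jumpTime]
  | succ n ih =>
      rw [jumpTime]
      calc ((n + 1 : ℕ) : ℕ∞) = (n : ℕ∞) + 1 := by push_cast; ring
      _ ≤ jumpTime p L 0 n + wait p (L n) := add_le_add ih (one_le_wait p (L n))

lemma numJumps_shift (p : ℝ) (L : ℕ → ℕ → ℝ) {a t : ℕ} (h : a ≤ t) (b : ℕ) :
    numJumps p L a t = numJumps p L b (t - a + b) := by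
  classical
  rw [numJumps, numJumps]
  congr 1
  ext n
  simp only [Finset.mem_filter, Finset.mem_range]
  have key : ∀ c : ℕ, (jumpTime p L c (n+1) ≤ ((c + (t - a) : ℕ) : ℕ∞)) ↔
      jumpTime p L 0 (n+1) ≤ ((t - a : ℕ) : ℕ∞) := by
    intro c
    rw [jumpTime_eq, Nat.cast_add]
    exact WithTop.add_le_add_iff_left WithTop.coe_ne_top
  have hbound : jumpTime p L 0 (n+1) ≤ ((t - a : ℕ) : ℕ∞) → n + 1 ≤ t - a := by
    intro hle
    have := (le_jumpTime_zero p L (n+1)).trans hle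
    exact_mod_cast this
  constructor
  · rintro ⟨hn, hle⟩
    have h1 : jumpTime p L 0 (n+1) ≤ ((t - a : ℕ) : ℕ∞) := by
      rw [← key a]
      have : ((a + (t - a) : ℕ) : ℕ∞) = (t : ℕ∞) := by
        congr 1; omega
      rwa [this]
    refine ⟨by have := hbound h1; omega, ?_⟩
    have : ((b + (t - a) : ℕ) : ℕ∞) = ((t - a + b : ℕ) : ℕ∞) := by congr 1; omega
    rw [← this]
    exact (key b).mpr h1
  · rintro ⟨hn, hle⟩
    have h1 : jumpTime p L 0 (n+1) ≤ ((t - a : ℕ) : ℕ∞) := by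
      rw [← key b]
      have : ((b + (t - a) : ℕ) : ℕ∞) = ((t - a + b : ℕ) : ℕ∞) := by congr 1; omega
      rwa [this]
    refine ⟨by have := hbound h1; omega, ?_⟩
    have : ((a + (t - a) : ℕ) : ℕ∞) = (t : ℕ∞) := by congr 1; omega
    rw [← this]
    exact (key a).mpr h1

lemma posAt_shift (d : ℕ) (x : Site d) (s : ℕ → Site d) (p : ℝ) (L : ℕ → ℕ → ℝ)
    {a t : ℕ} (h : a ≤ t) (b : ℕ) :
    posAt d x s p L a t = posAt d x s p L b (t - a + b) := by
  rw [posAt, posAt, numJumps_shift p L h b]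

end CouplingAux
namespace CouplingAux2
open Frog
variable {d : ℕ} {config : Site d → ℕ} {S : (Site d × ℕ) → ℕ → Site d}
    {L : (Site d × ℕ) → ℕ → ℕ → ℝ} {p : Bool → ℝ} {A B : Set (Site d)}
    {tie : Site d → ℕ → Bool}

lemma status₂_succ_some {t : ℕ} {y : Site d} {s : Bool × ℕ}
    (h : status₂ d config S L p A B tie t y = some s) :
    status₂ d config S L p A B tie (t+1) y = some s := by
  simp only [status₂, h]

lemma status₂_mono {t t' : ℕ} (htt : t ≤ t') {y : Site d} {s : Bool × ℕ}
    (h : status₂ d config S L p A B tie t y = some s) :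
    status₂ d config S L p A B tie t' y = some s := by
  induction t' with
  | zero => exact (Nat.le_zero.mp htt) ▸ h
  | succ t' ih =>
      rcases Nat.lt_or_ge t (t' + 1) with hlt | hge
      · exact status₂_succ_some (ih (Nat.lt_succ_iff.mp hlt))
      · exact (Nat.le_antisymm htt hge) ▸ h

lemma status₂_time {t : ℕ} {y : Site d} {i : Bool} {a : ℕ}
    (h : status₂ d config S L p A B tie t y = some (i, a)) :
    a ≤ t ∧ status₂ d config S L p A B tie a y = some (i, a) ∧
      ∀ t' < a, status₂ d config S L p A B tie t' y = none := by
  induction t with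
  | zero =>
      have ha : a = 0 := by
        rw [status₂] at h
        split_ifs at h <;> simp_all
      subst ha
      exact ⟨le_refl 0, h, fun t' ht' => absurd ht' (Nat.not_lt_zero t')⟩
  | succ t ih =>
      rcases hprev : status₂ d config S L p A B tie t y with _ | s
      · -- newly discovered at t+1
        have ha : a = t + 1 := by
          simp only [status₂, hprev] at h
          split_ifs at h <;> simp_all
        subst ha
        refine ⟨le_refl _, h, fun t' ht' => ?_⟩
        rcases hs : status₂ d config S L p A B tie t' y with _ | s'
        · rfl
        · rw [status₂_mono (Nat.lt_succ_iff.mp ht') hs] at hprev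
          exact absurd hprev (Option.some_ne_none s')
      · have hs : s = (i, a) := by
          have := status₂_succ_some hprev
          rw [this] at h
          exact Option.some_injective _ h
        subst hs
        obtain ⟨h1, h2, h3⟩ := ih hprev
        exact ⟨h1.trans (Nat.le_succ t), h2, h3⟩

lemma status₂_succ_of_hit {t : ℕ} {y : Site d}
    (hx : ∃ i x j a, j < config x ∧
      status₂ d config S L p A B tie t x = some (i, a) ∧
      posAt d x (S (x, j)) (p i) (L (x, j)) a (t + 1) = y) :
    status₂ d config S L p A B tie (t + 1) y ≠ none := by
  obtain ⟨i, x, j, a, hj, hst, hpos⟩ := hx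
  rcases hprev : status₂ d config S L p A B tie t y with _ | s
  · simp only [status₂, hprev]
    have hhit : ∃ x j a, j < config x ∧
        status₂ d config S L p A B tie t x = some (i, a) ∧
        posAt d x (S (x, j)) (p i) (L (x, j)) a (t + 1) = y :=
      ⟨x, j, a, hj, hst, hpos⟩
    cases i <;> split_ifs <;> simp_all
  · simp [status₂_succ_some hprev]

lemma hit_of_status₂_succ {t : ℕ} {y : Site d}
    (h1 : status₂ d config S L p A B tie (t + 1) y ≠ none)
    (h0 : status₂ d config S L p A B tie t y = none) :
    ∃ i x j a, j < config x ∧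
      status₂ d config S L p A B tie t x = some (i, a) ∧
      posAt d x (S (x, j)) (p i) (L (x, j)) a (t + 1) = y := by
  simp only [status₂, h0] at h1
  split_ifs at h1 with hf ht ht
  · obtain ⟨x, j, a, hj, hst, hpos⟩ := hf
    exact ⟨false, x, j, a, hj, hst, hpos⟩
  · obtain ⟨x, j, a, hj, hst, hpos⟩ := hf
    exact ⟨false, x, j, a, hj, hst, hpos⟩
  · obtain ⟨x, j, a, hj, hst, hpos⟩ := ht
    exact ⟨true, x, j, a, hj, hst, hpos⟩
  · exact absurd rfl h1

end CouplingAux2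
end Frog

/-- **Coupling claim in the proof of Proposition 1.**  Let `Σ` be a (finite) box containing
the origin and the bounded set `A`.  Couple the one-type frog model `Π̃⁰` started from the
origin (configuration drawn from `ν` everywhere) with the one-type frog model `Π^A` started
from `A`, so that on `Σᶜ` they share the same initial configuration, random walks and delay
variables (on `Σ` the data may differ).  Suppose `N_Σ` is a time by which all sites of `Σ`
are discovered in `Π̃⁰` and after which no particle of `Π̃⁰` originating in `Σ` ever
discovers a new site, and let `N = min {n : ξ^A_n ⊇ ξ̃⁰_{N_Σ}}`.  Then
`ξ̃⁰_{n−N} ⊆ ξ^A_n` for all `n > N`. -/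
theorem coupling_claim_prop1 (d : ℕ) (hd : 1 ≤ d)
    (p : ℝ) (hp0 : 0 < p) (hp1 : p ≤ 1)
    (Sigma : Set (Frog.Site d)) (hSfin : Sigma.Finite)
    (A : Set (Frog.Site d)) (hASig : A ⊆ Sigma) (h0Sig : (0 : Frog.Site d) ∈ Sigma)
    (config₀ configₐ : Frog.Site d → ℕ)
    (S₀ Sₐ : (Frog.Site d × ℕ) → ℕ → Frog.Site d)
    (L₀ Lₐ : (Frog.Site d × ℕ) → ℕ → ℕ → ℝ)
    (hconf : ∀ x ∉ Sigma, configₐ x = config₀ x)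
    (hS : ∀ x ∉ Sigma, ∀ j, Sₐ (x, j) = S₀ (x, j))
    (hL : ∀ x ∉ Sigma, ∀ j, Lₐ (x, j) = L₀ (x, j))
    (Nsig : ℕ)
    (hcover : Sigma ⊆ Frog.xi₁ d config₀ S₀ L₀ p {0} Nsig)
    (hnolater : ∀ t, Nsig < t → ∀ x ∈ Sigma, ∀ (j : ℕ) (y : Frog.Site d),
      ¬ Frog.discoversAt₁ d config₀ S₀ L₀ p {0} x j t y)
    (N : ℕ)
    (hN : Frog.xi₁ d config₀ S₀ L₀ p {0} Nsig ⊆ Frog.xi₁ d configₐ Sₐ Lₐ p A N)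
    (hNmin : ∀ m, Frog.xi₁ d config₀ S₀ L₀ p {0} Nsig ⊆ Frog.xi₁ d configₐ Sₐ Lₐ p A m →
      N ≤ m) :
    ∀ n, N < n →
      Frog.xi₁ d config₀ S₀ L₀ p {0} (n - N) ⊆ Frog.xi₁ d configₐ Sₐ Lₐ p A n := by
  have hpp : (fun i : Bool => if i then p else p) = (fun _ : Bool => p) := by
    funext i; cases i <;> rfl
  have hmem : ∀ (c : Frog.Site d → ℕ) (S : (Frog.Site d × ℕ) → ℕ → Frog.Site d)
      (L : (Frog.Site d × ℕ) → ℕ → ℕ → ℝ) (A₀ : Set (Frog.Site d)) (t : ℕ)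
      (y : Frog.Site d), y ∈ Frog.xi₁ d c S L p A₀ t ↔
      Frog.status₂ d c S L (fun _ => p) A₀ ∅ (fun _ _ => false) t y ≠ none := by
    intro c S L A₀ t y
    simp [Frog.xi₁, Frog.status₁, Option.map_eq_none_iff]
  have key : ∀ a (y : Frog.Site d),
      Frog.status₂ d config₀ S₀ L₀ (fun _ => p) {0} ∅ (fun _ _ => false) a y ≠ none →
      Frog.status₂ d configₐ Sₐ Lₐ (fun _ => p) A ∅ (fun _ _ => false) (a + N) y ≠
        none := by
    intro a
    induction a using Nat.strong_induction_on with
    | _ a IH =>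
    intro y hy
    obtain ⟨⟨i, a₀⟩, hs⟩ := Option.ne_none_iff_exists'.mp hy
    obtain ⟨ha₀a, hsa₀, hmin⟩ := Frog.CouplingAux2.status₂_time hs
    by_cases hle : a₀ ≤ Nsig
    · have hyN : y ∈ Frog.xi₁ d config₀ S₀ L₀ p {0} Nsig := by
        rw [hmem, Frog.CouplingAux2.status₂_mono hle hsa₀]
        simp
      have h2 := hN hyN
      rw [hmem] at h2
      obtain ⟨s', hs'⟩ := Option.ne_none_iff_exists'.mp h2
      rw [Frog.CouplingAux2.status₂_mono (Nat.le_add_left N a) hs']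
      simp
    · push_neg at hle
      obtain ⟨t, rfl⟩ : ∃ t, a₀ = t + 1 := ⟨a₀ - 1, by omega⟩
      have h0 : Frog.status₂ d config₀ S₀ L₀ (fun _ => p) {0} ∅ (fun _ _ => false) t y =
          none := hmin t (Nat.lt_succ_self t)
      have hne : Frog.status₂ d config₀ S₀ L₀ (fun _ => p) {0} ∅ (fun _ _ => false)
          (t + 1) y ≠ none := by rw [hsa₀]; simp
      obtain ⟨i', x, j, a', hj, hx, hpos⟩ :=
        Frog.CouplingAux2.hit_of_status₂_succ hne h0
      obtain ⟨ha't, hxa', hminx⟩ := Frog.CouplingAux2.status₂_time hx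
      have hxS : x ∉ Sigma := by
        intro hxSig
        refine hnolater (t + 1) hle x hxSig j y ?_
        unfold Frog.discoversAt₁ Frog.discoversAt₂
        rw [hpp]
        refine ⟨hj, by rw [hsa₀]; simp, hmin, i', a',
          Frog.CouplingAux2.status₂_mono (Nat.le_succ t) hx, ?_⟩
        cases i' <;> simpa using hpos
      have hxne : Frog.status₂ d config₀ S₀ L₀ (fun _ => p) {0} ∅ (fun _ _ => false) a' x ≠
          none := by rw [hxa']; simp
      have hxA := IH a' (by omega) x hxne
      obtain ⟨⟨i₂, b⟩, hbA⟩ := Option.ne_none_iff_exists'.mp hxA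
      obtain ⟨hble, hbb, -⟩ := Frog.CouplingAux2.status₂_time hbA
      have hposA : Frog.posAt d x (Sₐ (x, j)) p (Lₐ (x, j)) b (t + 1 - a' + b) = y := by
        rw [hS x hxS j, hL x hxS j,
          ← Frog.CouplingAux.posAt_shift d x (S₀ (x, j)) p (L₀ (x, j))
            (ha't.trans (Nat.le_succ t)) b]
        exact hpos
      have hsm : Frog.status₂ d configₐ Sₐ Lₐ (fun _ => p) A ∅ (fun _ _ => false)
          (t + 1 - a' + b - 1) x = some (i₂, b) :=
        Frog.CouplingAux2.status₂_mono (by omega) hbb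
      have hdisc : Frog.status₂ d configₐ Sₐ Lₐ (fun _ => p) A ∅ (fun _ _ => false)
          ((t + 1 - a' + b - 1) + 1) y ≠ none := by
        refine Frog.CouplingAux2.status₂_succ_of_hit
          ⟨i₂, x, j, b, by rw [hconf x hxS]; exact hj, hsm, ?_⟩
        have hm1 : (t + 1 - a' + b - 1) + 1 = t + 1 - a' + b := by omega
        rw [hm1]
        exact hposA
      obtain ⟨s₂, hs₂⟩ := Option.ne_none_iff_exists'.mp hdisc
      rw [Frog.CouplingAux2.status₂_mono (by omega) hs₂]
      simp
  intro n hn y hy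
  rw [hmem] at hy ⊢
  have h3 := key (n - N) y hy
  rwa [Nat.sub_add_cancel hn.le] at h3
end
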